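/- arXiv:2511.15896 — 4 statements merged into one kernel-verified Lean document; each statement's English description precedes it below -/
import Mathlib

section
/- Let f : ℝ^p → ℝ be a twice continuously differentiable convex function, θ₀ ∈ ℝ^p, and suppose there exist constants ν, c > 0 such that the Hessian ∇²f(θ) ⪰ ν·I for all θ with ‖θ - θ₀‖ ≤ c. Then for every θ ∈ ℝ^p, f(θ) ≥ f(θ₀) + ∇f(θ₀)ᵀ(θ - θ₀) + (ν/2)·min{‖θ - θ₀‖², c‖θ - θ₀‖}. -/
open scoped RealInnerProductSpace

open Set

/-!
Restrict `f` to the ray `t ↦ x + t • v` with `v = y - x`. On the part of the ray inside the ball of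
radius `c`, the Hessian bound makes `t ↦ f (x + t • v) - ν ‖v‖² t² / 2` convex, so `f` lies above
its tangent plus `ν ‖v‖² t² / 2`. If `‖v‖ ≤ c` this gives the claim at `t = 1`. Otherwise it gives
the bound at the point `t = c / ‖v‖` of the sphere, and convexity of `f` extrapolates the increment
linearly from there to `t = 1`, which turns `ν c² / 2` into `ν c ‖v‖ / 2`.
-/

theorem add_mul_add_div_mul_sq_le_of_hasDerivAt {h h' h'' : ℝ → ℝ} {a m : ℝ} (ha : 0 ≤ a)
    (hh : ∀ t ∈ Icc 0 a, HasDerivAt h (h' t) t) (hh' : ∀ t ∈ Icc 0 a, HasDerivAt h' (h'' t) t)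
    (hm : ∀ t ∈ Icc 0 a, m ≤ h'' t) :
    h 0 + a * h' 0 + m / 2 * a ^ 2 ≤ h a := by
  rcases ha.eq_or_lt with rfl | ha
  · simp
  set φ : ℝ → ℝ := fun t => h t - m / 2 * t ^ 2
  have hφ : ∀ t ∈ Icc 0 a, HasDerivAt φ (h' t - m * t) t := fun t ht =>
    ((hh t ht).fun_sub ((hasDerivAt_pow 2 t).const_mul (m / 2))).congr_deriv (by simp; ring)
  have hφ' : ∀ t ∈ Icc 0 a, HasDerivAt (fun t => h' t - m * t) (h'' t - m) t := fun t ht =>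
    ((hh' t ht).fun_sub ((hasDerivAt_id' t).const_mul m)).congr_deriv (by rw [mul_one])
  have hconv : ConvexOn ℝ (Icc 0 a) φ := by
    refine convexOn_of_hasDerivWithinAt2_nonneg (f' := fun t => h' t - m * t)
      (f'' := fun t => h'' t - m) (convex_Icc 0 a)
      (fun t ht => (hφ t ht).continuousAt.continuousWithinAt) (fun t ht => ?_)
      (fun t ht => ?_) (fun t ht => ?_) <;> have ht := interior_subset ht
    · exact (hφ t ht).hasDerivWithinAt
    · exact (hφ' t ht).hasDerivWithinAt
    · linarith [hm t ht]
  have hslope := hconv.le_slope_of_hasDerivAt (left_mem_Icc.2 ha.le) (right_mem_Icc.2 ha.le) ha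
    (hφ 0 (left_mem_Icc.2 ha.le))
  rw [slope_def_field, le_div_iff₀ (by linarith)] at hslope
  simp only [φ] at hslope
  linarith

section Line

variable {E : Type*} [NormedAddCommGroup E] [NormedSpace ℝ E] {f : E → ℝ}

theorem hasDerivAt_add_smul (x v : E) (t : ℝ) : HasDerivAt (fun t : ℝ => x + t • v) v t := by
  simpa using ((hasDerivAt_id t).smul_const v).const_add x

theorem hasDerivAt_comp_add_smul (hf : Differentiable ℝ f) (x v : E) (t : ℝ) :
    HasDerivAt (fun t : ℝ => f (x + t • v)) (fderiv ℝ f (x + t • v) v) t :=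
  (hf _).hasFDerivAt.comp_hasDerivAt t (hasDerivAt_add_smul x v t)

theorem hasDerivAt_fderiv_comp_add_smul (hf : ContDiff ℝ 2 f) (x v : E) (t : ℝ) :
    HasDerivAt (fun t : ℝ => fderiv ℝ f (x + t • v) v)
      (iteratedFDeriv ℝ 2 f (x + t • v) ![v, v]) t := by
  have hf' : Differentiable ℝ (fderiv ℝ f) :=
    (hf.fderiv_right (by norm_num)).differentiable one_ne_zero
  have := ((hf' _).hasFDerivAt.comp_hasDerivAt t (hasDerivAt_add_smul x v t)).clm_apply
    (hasDerivAt_const t v)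
  simpa [iteratedFDeriv_two_apply] using this

theorem add_mul_fderiv_add_le_of_iteratedFDeriv_ge (hf : ContDiff ℝ 2 f) {x v : E} {a m : ℝ}
    (ha : 0 ≤ a) (hm : ∀ t ∈ Icc 0 a, m ≤ iteratedFDeriv ℝ 2 f (x + t • v) ![v, v]) :
    f x + a * fderiv ℝ f x v + m / 2 * a ^ 2 ≤ f (x + a • v) := by
  have hfd : Differentiable ℝ f := hf.differentiable (by norm_num)
  simpa using add_mul_add_div_mul_sq_le_of_hasDerivAt ha
    (fun t _ => hasDerivAt_comp_add_smul hfd x v t)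
    (fun t _ => hasDerivAt_fderiv_comp_add_smul hf x v t) hm

end Line

theorem ConvexOn.sub_le_mul_sub {E : Type*} [AddCommGroup E] [Module ℝ E] {D : Set E}
    {f : E → ℝ} (hf : ConvexOn ℝ D f) {x y : E} (hx : x ∈ D) (hy : y ∈ D) {s : ℝ}
    (hs₀ : 0 ≤ s) (hs₁ : s ≤ 1) :
    f (x + s • (y - x)) - f x ≤ s * (f y - f x) := by
  have h := hf.2 hx hy (sub_nonneg.2 hs₁) hs₀ (by ring)
  have heq : (1 - s) • x + s • y = x + s • (y - x) := by module
  rw [heq, smul_eq_mul, smul_eq_mul] at h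
  linarith

theorem ConvexOn.add_fderiv_add_min_le_of_iteratedFDeriv_ge {E : Type*} [NormedAddCommGroup E]
    [NormedSpace ℝ E] {f : E → ℝ} (hconv : ConvexOn ℝ univ f) (hf : ContDiff ℝ 2 f) {x : E}
    {ν c : ℝ} (hc : 0 < c)
    (hHess : ∀ y, ‖y - x‖ ≤ c → ∀ v, ν * ‖v‖ ^ 2 ≤ iteratedFDeriv ℝ 2 f y ![v, v]) (y : E) :
    f x + fderiv ℝ f x (y - x) + ν / 2 * min (‖y - x‖ ^ 2) (c * ‖y - x‖) ≤ f y := by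
  set v := y - x
  have hquad : ∀ a, 0 ≤ a → a * ‖v‖ ≤ c →
      f x + a * fderiv ℝ f x v + ν * ‖v‖ ^ 2 / 2 * a ^ 2 ≤ f (x + a • v) := by
    refine fun a ha hac => add_mul_fderiv_add_le_of_iteratedFDeriv_ge hf ha fun t ht => ?_
    refine hHess _ ?_ v
    rw [add_sub_cancel_left, norm_smul, Real.norm_of_nonneg ht.1]
    nlinarith [norm_nonneg v, ht.2]
  rcases le_or_gt ‖v‖ c with hnear | hfar
  · have h := hquad 1 zero_le_one (by linarith)
    rw [min_eq_left (by nlinarith [norm_nonneg v])]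
    simp only [one_smul, v, add_sub_cancel] at h
    linarith
  · have hv : 0 < ‖v‖ := hc.trans hfar
    set s := c / ‖v‖
    have hs : 0 < s := div_pos hc hv
    have hsv : s * ‖v‖ = c := div_mul_cancel₀ c hv.ne'
    have h := hquad s hs.le hsv.le
    have hchord := hconv.sub_le_mul_sub (mem_univ x) (mem_univ y) hs.le
      ((div_le_one hv).2 hfar.le)
    have hscale : ν * ‖v‖ ^ 2 / 2 * s ^ 2 = s * (ν / 2 * (c * ‖v‖)) := by
      rw [← hsv]; ring
    rw [min_eq_right (by nlinarith)]
    rw [hscale] at h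
    nlinarith

theorem stmt0_general {p : ℕ} (f : EuclideanSpace ℝ (Fin p) → ℝ)
    (hf : ContDiff ℝ 2 f) (hconv : ConvexOn ℝ Set.univ f)
    (θ₀ : EuclideanSpace ℝ (Fin p)) (ν c : ℝ) (hc : 0 < c)
    (hHess : ∀ θ : EuclideanSpace ℝ (Fin p), ‖θ - θ₀‖ ≤ c →
      ∀ v : EuclideanSpace ℝ (Fin p), ν * ‖v‖ ^ 2 ≤ iteratedFDeriv ℝ 2 f θ ![v, v]) :
    ∀ θ : EuclideanSpace ℝ (Fin p),
      f θ₀ + ⟪gradient f θ₀, θ - θ₀⟫ +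
        ν / 2 * min (‖θ - θ₀‖ ^ 2) (c * ‖θ - θ₀‖) ≤ f θ := by
  intro θ
  rw [← InnerProductSpace.toDual_apply_apply, toDual_gradient]
  exact hconv.add_fderiv_add_min_le_of_iteratedFDeriv_ge hf hc hHess θ

/-- Lower bound for a convex `C²` function whose Hessian is bounded below by `ν·I`
on a ball of radius `c` around `θ₀`. -/
theorem stmt0 {p : ℕ} (f : EuclideanSpace ℝ (Fin p) → ℝ)
    (hf : ContDiff ℝ 2 f) (hconv : ConvexOn ℝ Set.univ f)
    (θ₀ : EuclideanSpace ℝ (Fin p)) (ν c : ℝ) (hν : 0 < ν) (hc : 0 < c)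
    (hHess : ∀ θ : EuclideanSpace ℝ (Fin p), ‖θ - θ₀‖ ≤ c →
      ∀ v : EuclideanSpace ℝ (Fin p), ν * ‖v‖ ^ 2 ≤ iteratedFDeriv ℝ 2 f θ ![v, v]) :
    ∀ θ : EuclideanSpace ℝ (Fin p),
      f θ₀ + ⟪gradient f θ₀, θ - θ₀⟫ +
        ν / 2 * min (‖θ - θ₀‖ ^ 2) (c * ‖θ - θ₀‖) ≤ f θ :=
  stmt0_general f hf hconv θ₀ ν c hc hHess
end

section
/- Let (Aₙ) be a sequence of nonnegative real-valued random variables and (Fₙ) a sequence of σ-algebras on a common probability space. If the conditional expectations E[Aₙ | Fₙ] converge to 0 in probability, then Aₙ converges to 0 in probability. -/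
open MeasureTheory Filter

/-!
On the `Fₙ`-measurable event `B = {E[Aₙ | Fₙ] < ε t}` the integrals of `Aₙ` and of its
conditional expectation agree, so Markov's inequality restricted to `B` gives
`P(Aₙ ≥ ε, B) ≤ t`. Off `B` the conditional expectation is at least `ε t`, an event whose
probability tends to `0` by hypothesis; as `t > 0` is arbitrary, `P(Aₙ ≥ ε) → 0`.
-/

namespace MeasureTheory

variable {Ω : Type*} {m m0 : MeasurableSpace Ω} {μ : Measure Ω} {f : Ω → ℝ}

lemma mul_measureReal_ge_inter_condExp_lt_le [IsFiniteMeasure μ] (hm : m ≤ m0)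
    (hf : Integrable f μ) (hf_nonneg : 0 ≤ᵐ[μ] f) (ε η : ℝ) :
    ε * μ.real ({ω | ε ≤ f ω} ∩ {ω | μ[f | m] ω < η}) ≤ η * μ.real {ω | μ[f | m] ω < η} := by
  set B := {ω | μ[f | m] ω < η}
  have hB : MeasurableSet[m] B :=
    stronglyMeasurable_condExp.measurable (measurableSet_Iio (a := η))
  calc ε * μ.real ({ω | ε ≤ f ω} ∩ B)
      = ε * (μ.restrict B).real {ω | ε ≤ f ω} := by
        rw [measureReal_restrict_apply' (hm B hB)]
    _ ≤ ∫ ω in B, f ω ∂μ :=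
        mul_meas_ge_le_integral_of_nonneg (ae_restrict_of_ae hf_nonneg) hf.restrict ε
    _ = ∫ ω in B, μ[f | m] ω ∂μ := (setIntegral_condExp hm hf hB).symm
    _ ≤ ∫ _ in B, η ∂μ :=
        setIntegral_mono_on integrable_condExp.integrableOn integrableOn_const
          (hm B hB) fun _ hω => le_of_lt hω
    _ = η * μ.real B := by rw [setIntegral_const, smul_eq_mul, mul_comm]

lemma measure_ge_le_add_measure_condExp_ge [IsProbabilityMeasure μ] (hm : m ≤ m0)
    (hf : Integrable f μ) (hf_nonneg : 0 ≤ᵐ[μ] f) {ε t : ℝ} (hε : 0 < ε) (ht : 0 ≤ t) :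
    μ {ω | ε ≤ f ω} ≤ ENNReal.ofReal t + μ {ω | ε * t ≤ μ[f | m] ω} := by
  set B := {ω | μ[f | m] ω < ε * t}
  have hsmall : μ ({ω | ε ≤ f ω} ∩ B) ≤ ENNReal.ofReal t := by
    refine ENNReal.le_ofReal_iff_toReal_le (measure_ne_top _ _) ht |>.mpr ?_
    refine le_of_mul_le_mul_left ?_ hε
    calc ε * μ.real ({ω | ε ≤ f ω} ∩ B)
        ≤ ε * t * μ.real B := mul_measureReal_ge_inter_condExp_lt_le hm hf hf_nonneg ε (ε * t)
      _ ≤ ε * t := mul_le_of_le_one_right (by positivity) measureReal_le_one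
  have hsplit : {ω | ε ≤ f ω} ⊆ ({ω | ε ≤ f ω} ∩ B) ∪ {ω | ε * t ≤ μ[f | m] ω} := by
    intro ω hω
    by_cases hωB : μ[f | m] ω < ε * t
    · exact Or.inl ⟨hω, hωB⟩
    · exact Or.inr (le_of_not_gt hωB)
  calc μ {ω | ε ≤ f ω}
      ≤ μ ({ω | ε ≤ f ω} ∩ B) + μ {ω | ε * t ≤ μ[f | m] ω} :=
        (measure_mono hsplit).trans (measure_union_le _ _)
    _ ≤ ENNReal.ofReal t + μ {ω | ε * t ≤ μ[f | m] ω} := by gcongr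

end MeasureTheory

theorem stmt1_general {Ω : Type*} {m0 : MeasurableSpace Ω} (μ : Measure Ω) [IsProbabilityMeasure μ]
    (F : ℕ → MeasurableSpace Ω) (hF : ∀ n, F n ≤ m0)
    (A : ℕ → Ω → ℝ) (hAnn : ∀ n ω, 0 ≤ A n ω)
    (hAint : ∀ n, Integrable (A n) μ)
    (h : TendstoInMeasure μ (fun n => μ[A n | F n]) atTop (0 : Ω → ℝ)) :
    TendstoInMeasure μ A atTop (0 : Ω → ℝ) := by
  rw [tendstoInMeasure_iff_dist] at h ⊢
  intro ε hε
  refine ENNReal.tendsto_nhds_zero.mpr fun δ hδ => ?_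
  obtain ⟨t, -, ht_ofReal_pos, ht_lt⟩ :=
    ENNReal.lt_iff_exists_real_btwn.mp (ENNReal.half_pos hδ.ne')
  have ht_pos : 0 < t := ENNReal.ofReal_pos.mp ht_ofReal_pos
  filter_upwards [(h (ε * t) (by positivity)).eventually_lt_const (ENNReal.half_pos hδ.ne')]
    with n hn
  have hbound := measure_ge_le_add_measure_condExp_ge (hF n) (hAint n)
    (ae_of_all _ (hAnn n)) hε ht_pos.le
  simp only [Real.dist_eq, Pi.zero_apply, sub_zero] at hn ⊢
  calc μ {ω | ε ≤ |A n ω|}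
      = μ {ω | ε ≤ A n ω} := by simp only [abs_of_nonneg (hAnn n _)]
    _ ≤ ENNReal.ofReal t + μ {ω | ε * t ≤ |μ[A n | F n] ω|} :=
        hbound.trans (by gcongr with ω; exact le_abs_self _)
    _ ≤ δ / 2 + δ / 2 := add_le_add ht_lt.le hn.le
    _ = δ := ENNReal.add_halves δ

/-- If the conditional expectations `E[Aₙ | Fₙ]` of nonnegative random variables
converge to 0 in probability, then `Aₙ → 0` in probability. -/
theorem stmt1 {Ω : Type*} {m0 : MeasurableSpace Ω} (μ : Measure Ω) [IsProbabilityMeasure μ]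
    (F : ℕ → MeasurableSpace Ω) (hF : ∀ n, F n ≤ m0)
    (A : ℕ → Ω → ℝ) (hAmeas : ∀ n, Measurable (A n)) (hAnn : ∀ n ω, 0 ≤ A n ω)
    (hAint : ∀ n, Integrable (A n) μ)
    (h : TendstoInMeasure μ (fun n => μ[A n | F n]) atTop (0 : Ω → ℝ)) :
    TendstoInMeasure μ A atTop (0 : Ω → ℝ) :=
  stmt1_general μ F hF A hAnn hAint h
end

section
/- Consider the constrained optimization min_w ∑_{i∈I_c} w_i² subject to |(1/|I_c|)∑_{i∈I_c} w_i φ_k(X_i) − c_k| ≤ δ_k for k = 1,…,d, where c ∈ ℝ^d, δ ∈ ℝ^d_{≥0}, and Φ_c ∈ ℝ^{|I_c|×d} has rows φ(X_i). Then the optimal solution has the form ŵ = Φ_c λ̂ / |I_c| up to scaling, where λ̂ ∈ ℝ^d minimizes the unconstrained convex dual objective L̂(λ) = λᵀ Σ̂_c λ − 2λᵀ c + 2 ∑_k δ_k|λ_k| with Σ̂_c = Φ_cᵀΦ_c/|I_c|; equivalently, the primal optimal weights lie in the column space of Φ_c and the primal optimum equals the negative of the dual optimum value. -/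
/-!
The least-norm point `ŵ` of the feasible polyhedron satisfies the KKT conditions: by Farkas'
lemma for the cone spanned by the normals of the active constraints (closed by Carathéodory's
argument), `-ŵ` is a nonnegative combination of them, which gives `ŵ = Φ λ̂` with complementary
slackness. The identity
`‖w‖² + n L̂(λ) = ‖w - Φ λ‖² + 2n ∑ₖ (λₖ (mₖ(w) - cₖ) + δₖ |λₖ|)`
(with `mₖ(w)` the weighted `k`-th moment) then yields weak duality `-n L̂(λ) ≤ ‖w‖²` for every
feasible `w`, with equality at `(ŵ, λ̂)`, so `λ̂` minimizes `L̂`.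
-/

open Filter Topology Matrix
open scoped RealInnerProductSpace

namespace PointedCone

section Algebraic

variable {𝕜 E ι : Type*} [Field 𝕜] [LinearOrder 𝕜] [IsStrictOrderedRing 𝕜]
  [AddCommGroup E] [Module 𝕜 E] {g : ι → E} {s : Finset ι} {x : E}

theorem mem_hull_image_finset_iff :
    x ∈ hull 𝕜 (g '' s) ↔ ∃ c : ι → 𝕜, (∀ i ∈ s, 0 ≤ c i) ∧ ∑ i ∈ s, c i • g i = x := by
  classical
  rw [Submodule.mem_span_image_finset_iff_exists_fun']
  constructor
  · rintro ⟨c, rfl⟩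
    exact ⟨fun i => c i, fun i _ => (c i).2, by simp only [Nonneg.coe_smul]⟩
  · rintro ⟨c, hc, rfl⟩
    refine ⟨fun i => if h : i ∈ s then ⟨c i, hc i h⟩ else 0, Finset.sum_congr rfl fun i hi => ?_⟩
    simp [hi, Nonneg.mk_smul]

/-- Carathéodory's argument: moving a conic combination along a linear relation among the
generators until a coefficient vanishes. -/
theorem hull_image_finset_eq_biUnion_erase [DecidableEq ι] (h : ¬LinearIndepOn 𝕜 g s) :
    (hull 𝕜 (g '' s) : Set E) = ⋃ i ∈ s, (hull 𝕜 (g '' ↑(s.erase i)) : Set E) := by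
  refine subset_antisymm (fun x hx => ?_) (Set.iUnion₂_subset fun i _ =>
    Submodule.span_mono (Set.image_mono (Finset.coe_subset.2 (s.erase_subset i))))
  obtain ⟨t, ht, rfl⟩ := mem_hull_image_finset_iff.1 hx
  obtain ⟨f, hf, hpos⟩ : ∃ f : ι → 𝕜, ∑ i ∈ s, f i • g i = 0 ∧ ∃ i ∈ s, 0 < f i := by
    obtain ⟨f, hf, i, hi, hfi⟩ : ∃ f : ι → 𝕜, ∑ i ∈ s, f i • g i = 0 ∧ ∃ i ∈ s, f i ≠ 0 := by
      simpa [linearIndepOn_finset_iff] using h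
    rcases hfi.lt_or_gt with hneg | hpos
    · exact ⟨-f, by simp [neg_smul, hf], i, hi, by simpa using hneg⟩
    · exact ⟨f, hf, i, hi, hpos⟩
  obtain ⟨j, hj, hmin⟩ := Finset.exists_min_image (s.filter (0 < f ·)) (fun i => t i / f i)
    (by simpa [Finset.Nonempty] using hpos)
  rw [Finset.mem_filter] at hj
  set τ := t j / f j
  have hτ : 0 ≤ τ := div_nonneg (ht j hj.1) hj.2.le
  refine Set.mem_biUnion hj.1 (mem_hull_image_finset_iff.2 ⟨fun i => t i - τ * f i, ?_, ?_⟩)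
  · intro i hi
    have hi := (Finset.mem_erase.1 hi).2
    rcases lt_or_ge 0 (f i) with hfi | hfi
    · have := hmin i (Finset.mem_filter.2 ⟨hi, hfi⟩)
      rw [le_div_iff₀ hfi] at this
      linarith
    · nlinarith [ht i hi]
  · have hj0 : t j - τ * f j = 0 := by simp [τ, div_mul_cancel₀ _ hj.2.ne']
    rw [Finset.sum_erase _ (by simp [hj0])]
    simp [sub_smul, Finset.sum_sub_distrib, mul_smul, ← Finset.smul_sum, hf]

end Algebraic

variable {E ι : Type*} [NormedAddCommGroup E] {g : ι → E} {s : Finset ι}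

theorem isClosed_hull_image_finset_of_linearIndepOn [NormedSpace ℝ E] (h : LinearIndepOn ℝ g s) :
    IsClosed (hull ℝ (g '' s) : Set E) := by
  set F := Fintype.linearCombination ℝ fun i : s => g i
  have hF : IsClosedEmbedding F := F.isClosedEmbedding_of_injective
    (LinearMap.ker_eq_bot.2 (linearIndependent_iff_injective_fintypeLinearCombination.1 h))
  have himage : (hull ℝ (g '' s) : Set E) = F '' Set.Ici 0 := by
    ext x
    simp only [SetLike.mem_coe, Submodule.mem_span_image_finset_iff_exists_fun, Set.mem_image,
      Set.mem_Ici, F, Fintype.linearCombination_apply]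
    constructor
    · rintro ⟨c, rfl⟩
      exact ⟨fun i => c i, fun i => (c i).2, by simp only [Nonneg.coe_smul]⟩
    · rintro ⟨c, hc, rfl⟩
      exact ⟨fun i => ⟨c i, hc i⟩, by simp only [Nonneg.mk_smul]⟩
  rw [himage]
  exact hF.isClosedMap _ isClosed_Ici

theorem isClosed_hull_image_finset [NormedSpace ℝ E] [FiniteDimensional ℝ E] (g : ι → E)
    (s : Finset ι) : IsClosed (hull ℝ (g '' s) : Set E) := by
  classical
  induction s using Finset.strongInduction with
  | H s ih =>
    by_cases h : LinearIndepOn ℝ g s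
    · exact isClosed_hull_image_finset_of_linearIndepOn h
    · rw [hull_image_finset_eq_biUnion_erase h]
      exact s.finite_toSet.isClosed_biUnion fun i hi => ih _ (s.erase_ssubset hi)

theorem exists_inner_nonneg_of_notMem_hull [InnerProductSpace ℝ E] [FiniteDimensional ℝ E]
    {x : E} (hx : x ∉ hull ℝ (g '' s)) : ∃ y, (∀ i ∈ s, 0 ≤ ⟪g i, y⟫) ∧ ⟪x, y⟫ < 0 := by
  obtain ⟨y, hy, hxy⟩ :=
    ProperCone.hyperplane_separation' ⟨hull ℝ (g '' s), isClosed_hull_image_finset g s⟩ hx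
  exact ⟨y, fun i hi => hy _ (subset_hull ⟨i, hi, rfl⟩), hxy⟩

end PointedCone

section LeastNorm

variable {E ι : Type*} [NormedAddCommGroup E] [InnerProductSpace ℝ E] (a : ι → E) (b : ι → ℝ)

theorem eventually_forall_inner_add_smul_le [Finite ι] {x v : E} (hx : ∀ j, ⟪a j, x⟫ ≤ b j)
    (hv : ∀ j, ⟪a j, x⟫ = b j → ⟪a j, v⟫ ≤ 0) :
    ∀ᶠ t in 𝓝[>] (0 : ℝ), ∀ j, ⟪a j, x + t • v⟫ ≤ b j := by
  refine eventually_all.2 fun j => ?_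
  rcases (hx j).eq_or_lt with hj | hj
  · filter_upwards [self_mem_nhdsWithin] with t (ht : 0 < t)
    rw [inner_add_right, inner_smul_right, hj]
    nlinarith [hv j hj]
  · have hcont : Continuous fun t : ℝ => ⟪a j, x + t • v⟫ := by fun_prop
    have hlim : Tendsto (fun t : ℝ => ⟪a j, x + t • v⟫) (𝓝[>] 0) (𝓝 ⟪a j, x⟫) := by
      simpa using (hcont.tendsto 0).mono_left nhdsWithin_le_nhds
    exact (hlim.eventually_lt_const hj).mono fun _ h => h.le

theorem eventually_norm_add_smul_lt {x v : E} (h : ⟪x, v⟫ < 0) :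
    ∀ᶠ t in 𝓝[>] (0 : ℝ), ‖x + t • v‖ < ‖x‖ := by
  have hlim : Tendsto (fun t : ℝ => 2 * ⟪x, v⟫ + t * ‖v‖ ^ 2) (𝓝[>] 0) (𝓝 (2 * ⟪x, v⟫)) := by
    have : Continuous fun t : ℝ => 2 * ⟪x, v⟫ + t * ‖v‖ ^ 2 := by fun_prop
    simpa using (this.tendsto 0).mono_left nhdsWithin_le_nhds
  filter_upwards [self_mem_nhdsWithin, hlim.eventually_lt_const (by linarith : 2 * ⟪x, v⟫ < 0)]
    with t (ht : 0 < t) hneg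
  have hsq : ‖x + t • v‖ ^ 2 = ‖x‖ ^ 2 + t * (2 * ⟪x, v⟫ + t * ‖v‖ ^ 2) := by
    rw [norm_add_sq_real, inner_smul_right, norm_smul, Real.norm_eq_abs, abs_of_pos ht]
    ring
  exact (sq_lt_sq₀ (norm_nonneg _) (norm_nonneg _)).1 (by nlinarith)

theorem exists_kkt_of_isMinOn_norm [Fintype ι] [FiniteDimensional ℝ E] {x : E}
    (hmin : IsMinOn (‖·‖) {y | ∀ j, ⟪a j, y⟫ ≤ b j} x) (hx : ∀ j, ⟪a j, x⟫ ≤ b j) :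
    ∃ μ : ι → ℝ, (∀ j, 0 ≤ μ j) ∧ (∀ j, μ j * (b j - ⟪a j, x⟫) = 0) ∧ ∑ j, μ j • a j = -x := by
  classical
  set active := Finset.univ.filter fun j => ⟪a j, x⟫ = b j
  by_cases hcone : -x ∈ PointedCone.hull ℝ (a '' active)
  · obtain ⟨μ, hμ, hsum⟩ := PointedCone.mem_hull_image_finset_iff.1 hcone
    refine ⟨fun j => if j ∈ active then μ j else 0, fun j => ?_, fun j => ?_, ?_⟩
    · dsimp only
      split_ifs with hj
      exacts [hμ j hj, le_rfl]
    · dsimp only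
      split_ifs with hj
      · simp [(Finset.mem_filter.1 hj).2]
      · simp
    · simpa [ite_smul, Finset.sum_filter] using hsum
  · -- Otherwise Farkas' lemma yields a feasible direction along which the norm decreases.
    obtain ⟨y, hy, hxy⟩ := PointedCone.exists_inner_nonneg_of_notMem_hull hcone
    have hfeas := eventually_forall_inner_add_smul_le a b (v := -y) hx fun j hj => by
      simpa [inner_neg_right] using hy j (by simp [active, hj])
    have hdecr := eventually_norm_add_smul_lt (x := x) (v := -y) (by
      simpa [inner_neg_left, inner_neg_right] using hxy)
    obtain ⟨t, ht, hlt⟩ := (hfeas.and hdecr).exists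
    exact ((hmin ht).not_gt hlt).elim

end LeastNorm

namespace MinimalWeights

variable {n d : ℕ} (Φ : Matrix (Fin n) (Fin d) ℝ) (c δ : Fin d → ℝ)

noncomputable def moment (w : Fin n → ℝ) (k : Fin d) : ℝ := (1 / (n : ℝ)) * ∑ i, w i * Φ i k

noncomputable def dualObjective (lam : Fin d → ℝ) : ℝ :=
  lam ⬝ᵥ (((n : ℝ)⁻¹ • (Φᵀ * Φ)) *ᵥ lam) - 2 * (lam ⬝ᵥ c) + 2 * ∑ k, δ k * |lam k|

theorem sum_sq_add_mul_dualObjective (hn : n ≠ 0) (w : Fin n → ℝ) (lam : Fin d → ℝ) :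
    ∑ i, w i ^ 2 + n * dualObjective Φ c δ lam =
      ∑ i, (w i - (Φ *ᵥ lam) i) ^ 2 +
        2 * n * ∑ k, (lam k * (moment Φ w k - c k) + δ k * |lam k|) := by
  have hquad : lam ⬝ᵥ (((n : ℝ)⁻¹ • (Φᵀ * Φ)) *ᵥ lam) = (n : ℝ)⁻¹ * ∑ i, (Φ *ᵥ lam) i ^ 2 := by
    rw [smul_mulVec, dotProduct_smul, ← mulVec_mulVec, dotProduct_mulVec, vecMul_transpose,
      smul_eq_mul]
    simp only [dotProduct, sq]
  have hcross : ∑ i, w i * (Φ *ᵥ lam) i = n * ∑ k, lam k * moment Φ w k := by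
    simp only [moment, mulVec, dotProduct, Finset.mul_sum]
    rw [Finset.sum_comm]
    refine Finset.sum_congr rfl fun k _ => Finset.sum_congr rfl fun i _ => ?_
    field_simp
  have hsq : ∑ i, (w i - (Φ *ᵥ lam) i) ^ 2 =
      ∑ i, w i ^ 2 - 2 * ∑ i, w i * (Φ *ᵥ lam) i + ∑ i, (Φ *ᵥ lam) i ^ 2 := by
    simp only [sub_sq, Finset.sum_add_distrib, Finset.sum_sub_distrib, Finset.mul_sum, mul_assoc]
  have hslack : ∑ k, (lam k * (moment Φ w k - c k) + δ k * |lam k|) =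
      ∑ k, lam k * moment Φ w k - lam ⬝ᵥ c + ∑ k, δ k * |lam k| := by
    simp only [dotProduct, mul_sub, Finset.sum_add_distrib, Finset.sum_sub_distrib]
  have hn' : (n : ℝ) ≠ 0 := Nat.cast_ne_zero.2 hn
  rw [dualObjective, hquad, hsq, hcross, hslack]
  field_simp
  ring

variable {Φ c δ}

theorem neg_mul_dualObjective_le_sum_sq (hn : n ≠ 0) {w : Fin n → ℝ}
    (hw : ∀ k, |moment Φ w k - c k| ≤ δ k) (lam : Fin d → ℝ) :
    -(n * dualObjective Φ c δ lam) ≤ ∑ i, w i ^ 2 := by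
  have hterm (k : Fin d) : 0 ≤ lam k * (moment Φ w k - c k) + δ k * |lam k| := by
    have := neg_abs_le (lam k * (moment Φ w k - c k))
    rw [abs_mul] at this
    nlinarith [hw k, abs_nonneg (lam k)]
  have hslack := mul_nonneg (by positivity : (0 : ℝ) ≤ 2 * n)
    (Finset.sum_nonneg fun k (_ : k ∈ Finset.univ) => hterm k)
  have hdist := Finset.sum_nonneg fun i (_ : i ∈ Finset.univ) => sq_nonneg (w i - (Φ *ᵥ lam) i)
  linarith [sum_sq_add_mul_dualObjective Φ c δ hn w lam]

theorem sum_sq_eq_neg_mul_dualObjective (hn : n ≠ 0) {w : Fin n → ℝ}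
    (hw : ∀ k, |moment Φ w k - c k| ≤ δ k) {lam : Fin d → ℝ} (hΦ : w = Φ *ᵥ lam)
    (hslack : ∀ k, lam k * (moment Φ w k - c k) + δ k * |lam k| ≤ 0) :
    ∑ i, w i ^ 2 = -(n * dualObjective Φ c δ lam) := by
  refine le_antisymm ?_ (neg_mul_dualObjective_le_sum_sq hn hw lam)
  have hdist : ∑ i, (w i - (Φ *ᵥ lam) i) ^ 2 = 0 := by simp [← hΦ]
  have hslack' := mul_nonpos_of_nonneg_of_nonpos (by positivity : (0 : ℝ) ≤ 2 * n)
    (Finset.sum_nonpos fun k (_ : k ∈ Finset.univ) => hslack k)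
  linarith [sum_sq_add_mul_dualObjective Φ c δ hn w lam]

variable (Φ c δ)

noncomputable def column (k : Fin d) : EuclideanSpace ℝ (Fin n) :=
  WithLp.toLp 2 fun i => Φ i k / n

/-- The constraint `|moment Φ w k - c k| ≤ δ k` is split into the half-spaces indexed by
`inl k` (upper bound) and `inr k` (lower bound). -/
noncomputable def constraintNormal : Fin d ⊕ Fin d → EuclideanSpace ℝ (Fin n) :=
  Sum.elim (column Φ) fun k => -column Φ k

def constraintBound : Fin d ⊕ Fin d → ℝ :=
  Sum.elim (fun k => c k + δ k) fun k => δ k - c k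

variable {Φ c δ}

theorem inner_column_toLp (v : Fin n → ℝ) (k : Fin d) :
    ⟪column Φ k, WithLp.toLp 2 v⟫ = moment Φ v k := by
  simp only [column, EuclideanSpace.inner_toLp_toLp, moment, dotProduct, star_trivial,
    Finset.mul_sum]
  exact Finset.sum_congr rfl fun i _ => by ring

theorem forall_inner_constraintNormal_le_iff (v : Fin n → ℝ) :
    (∀ j, ⟪constraintNormal Φ j, WithLp.toLp 2 v⟫ ≤ constraintBound c δ j) ↔
      ∀ k, |moment Φ v k - c k| ≤ δ k := by
  simp only [Sum.forall, constraintNormal, constraintBound, Sum.elim_inl, Sum.elim_inr,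
    inner_neg_left, inner_column_toLp, abs_le', ← forall_and]
  refine forall_congr' fun k => and_congr ?_ ?_ <;> constructor <;> intro <;> linarith

theorem sum_smul_constraintNormal (μ : Fin d ⊕ Fin d → ℝ) :
    ∑ j, μ j • constraintNormal Φ j =
      WithLp.toLp 2 (Φ *ᵥ fun k => (μ (.inl k) - μ (.inr k)) / n) := by
  refine WithLp.ofLp_injective 2 (funext fun i => ?_)
  simp only [Fintype.sum_sum_type, constraintNormal, column, Sum.elim_inl, Sum.elim_inr,
    smul_neg, Finset.sum_neg_distrib, ← sub_eq_add_neg, WithLp.ofLp_sub, WithLp.ofLp_sum,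
    WithLp.ofLp_smul, Pi.sub_apply, Finset.sum_apply, Pi.smul_apply, smul_eq_mul, mulVec,
    dotProduct, ← Finset.sum_sub_distrib]
  exact Finset.sum_congr rfl fun k _ => by ring

theorem exists_dual_certificate {w : Fin n → ℝ}
    (hw : ∀ k, |moment Φ w k - c k| ≤ δ k)
    (hmin : ∀ w', (∀ k, |moment Φ w' k - c k| ≤ δ k) → ∑ i, w i ^ 2 ≤ ∑ i, w' i ^ 2) :
    ∃ lam : Fin d → ℝ, w = Φ *ᵥ lam ∧
      ∀ k, lam k * (moment Φ w k - c k) + δ k * |lam k| ≤ 0 := by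
  have hmin' : IsMinOn (‖·‖) {y | ∀ j, ⟪constraintNormal Φ j, y⟫ ≤ constraintBound c δ j}
      (WithLp.toLp 2 w) := by
    refine isMinOn_iff.2 fun y hy => ?_
    rw [← sq_le_sq₀ (norm_nonneg _) (norm_nonneg _), ← WithLp.toLp_ofLp 2 y,
      EuclideanSpace.real_norm_sq_eq, EuclideanSpace.real_norm_sq_eq]
    exact hmin _ ((forall_inner_constraintNormal_le_iff _).1 hy)
  obtain ⟨μ, hμ, hcs, hsum⟩ := exists_kkt_of_isMinOn_norm _ _ hmin'
    ((forall_inner_constraintNormal_le_iff w).2 hw)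
  refine ⟨fun k => (μ (.inr k) - μ (.inl k)) / n, ?_, fun k => ?_⟩
  · rw [sum_smul_constraintNormal, ← WithLp.toLp_neg, (WithLp.toLp_injective 2).eq_iff,
      ← neg_eq_iff_eq_neg, ← mulVec_neg] at hsum
    rw [← hsum]
    congr 1
    funext k
    simp only [Pi.neg_apply]
    ring
  · have hupper := hcs (.inl k)
    have hlower := hcs (.inr k)
    simp only [constraintNormal, constraintBound, Sum.elim_inl, Sum.elim_inr, inner_neg_left,
      inner_column_toLp] at hupper hlower
    have hδ : 0 ≤ δ k := (abs_nonneg _).trans (hw k)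
    have habs : |μ (.inr k) - μ (.inl k)| ≤ μ (.inr k) + μ (.inl k) :=
      abs_sub_le_iff.2 ⟨by linarith [hμ (.inl k)], by linarith [hμ (.inr k)]⟩
    have hscaled : (μ (.inr k) - μ (.inl k)) * (moment Φ w k - c k) +
        δ k * |μ (.inr k) - μ (.inl k)| ≤ 0 := by nlinarith
    calc _ = ((μ (.inr k) - μ (.inl k)) * (moment Φ w k - c k) +
          δ k * |μ (.inr k) - μ (.inl k)|) / n := by
          rw [abs_div, Nat.abs_cast]
          ring
      _ ≤ 0 := div_nonpos_of_nonpos_of_nonneg hscaled (Nat.cast_nonneg n)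

end MinimalWeights

theorem stmt9_general {n d : ℕ} (hn : 0 < n)
    (Φ : Matrix (Fin n) (Fin d) ℝ) (c : Fin d → ℝ) (δ : Fin d → ℝ)
    (feasible : (Fin n → ℝ) → Prop)
    (hfeas : ∀ w, feasible w ↔
      ∀ k, |(1 / (n : ℝ)) * ∑ i, w i * Φ i k - c k| ≤ δ k)
    (what : Fin n → ℝ) (hwfeas : feasible what)
    (hopt : ∀ w, feasible w → ∑ i, what i ^ 2 ≤ ∑ i, w i ^ 2)
    (Sighat : Matrix (Fin d) (Fin d) ℝ) (hSig : Sighat = ((n : ℝ)⁻¹) • (Φᵀ * Φ))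
    (Lhat : (Fin d → ℝ) → ℝ)
    (hL : ∀ lam, Lhat lam =
      lam ⬝ᵥ (Sighat *ᵥ lam) - 2 * (lam ⬝ᵥ c) + 2 * ∑ k, δ k * |lam k|) :
    ∃ lamhat : Fin d → ℝ,
      (∀ lam, Lhat lamhat ≤ Lhat lam) ∧
      what = Φ *ᵥ lamhat ∧
      ∑ i, what i ^ 2 = -((n : ℝ) * Lhat lamhat) := by
  obtain rfl : Lhat = MinimalWeights.dualObjective Φ c δ :=
    funext fun lam => by rw [hL, hSig]; rfl
  have hw : ∀ k, |MinimalWeights.moment Φ what k - c k| ≤ δ k := (hfeas what).1 hwfeas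
  obtain ⟨lamhat, hΦ, hslack⟩ :=
    MinimalWeights.exists_dual_certificate hw fun w h => hopt w ((hfeas w).2 h)
  have hval := MinimalWeights.sum_sq_eq_neg_mul_dualObjective hn.ne' hw hΦ hslack
  refine ⟨lamhat, fun lam => ?_, hΦ, hval⟩
  have hweak := MinimalWeights.neg_mul_dualObjective_le_sum_sq hn.ne' hw lam
  exact le_of_mul_le_mul_left (by linarith) (Nat.cast_pos.2 hn)

/-- Lagrangian duality for the minimal (stable balancing) weights problem: the minimizer
of `∑ wᵢ²` under box-type balance constraints lies in the column space of the feature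
matrix, `ŵ = Φ λ̂` for a minimizer `λ̂` of the lasso-type dual objective
`L̂(λ) = λᵀΣ̂λ − 2λᵀc + 2∑ₖ δₖ|λₖ|`, and the primal optimum equals the negative of the
dual optimum value (up to the scaling factor `n`). -/
theorem stmt9 {n d : ℕ} (hn : 0 < n)
    (Φ : Matrix (Fin n) (Fin d) ℝ) (c : Fin d → ℝ) (δ : Fin d → ℝ) (hδ : ∀ k, 0 ≤ δ k)
    (feasible : (Fin n → ℝ) → Prop)
    (hfeas : ∀ w, feasible w ↔
      ∀ k, |(1 / (n : ℝ)) * ∑ i, w i * Φ i k - c k| ≤ δ k)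
    (what : Fin n → ℝ) (hwfeas : feasible what)
    (hopt : ∀ w, feasible w → ∑ i, what i ^ 2 ≤ ∑ i, w i ^ 2)
    (Sighat : Matrix (Fin d) (Fin d) ℝ) (hSig : Sighat = ((n : ℝ)⁻¹) • (Φᵀ * Φ))
    (Lhat : (Fin d → ℝ) → ℝ)
    (hL : ∀ lam, Lhat lam =
      lam ⬝ᵥ (Sighat *ᵥ lam) - 2 * (lam ⬝ᵥ c) + 2 * ∑ k, δ k * |lam k|) :
    ∃ lamhat : Fin d → ℝ,
      (∀ lam, Lhat lamhat ≤ Lhat lam) ∧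
      what = Φ *ᵥ lamhat ∧
      ∑ i, what i ^ 2 = -((n : ℝ) * Lhat lamhat) :=
  stmt9_general hn Φ c δ feasible hfeas what hwfeas hopt Sighat hSig Lhat hL
end

section
/- ℓ¹ error bound under the compatibility condition: let λ̂ minimize L̂(λ) = (1/n)‖X_cλ‖² − 2λᵀμ̂ + ν‖λ‖₁ and let λ* be supported on S with |S| = s. Assume (i) ‖(1/n)X_cᵀX_cλ* − μ̂‖_∞ ≤ ν/4, and (ii) the compatibility condition with constant φ₀ > 0: for all v with ‖v_{S^c}‖₁ ≤ 3‖v_S‖₁, ‖v_S‖₁² ≤ (s/φ₀²)·(1/n)‖X_c v‖². Then ‖λ̂ − λ*‖₁ ≤ 6 s ν / φ₀². -/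
open Matrix

/-- ℓ¹ error bound under the compatibility condition: if `λ̂` minimizes the lasso-type
objective `L̂(λ) = (1/n)‖X_cλ‖² − 2λᵀμ̂ + ν‖λ‖₁`, `λ*` is supported on `S` with `|S| = s`,
the noise level satisfies `‖(1/n)X_cᵀX_cλ* − μ̂‖_∞ ≤ ν/4`, and the compatibility
condition with constant `φ₀` holds, then `‖λ̂ − λ*‖₁ ≤ 6sν/φ₀²`. -/
theorem stmt16 {n p : ℕ} (hn : 0 < n)
    (Xc : Matrix (Fin n) (Fin p) ℝ) (μhat : Fin p → ℝ) (ν : ℝ) (hν : 0 < ν)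
    (Lhat : (Fin p → ℝ) → ℝ)
    (hL : ∀ lam, Lhat lam = (1 / (n : ℝ)) * ∑ i, (Xc *ᵥ lam) i ^ 2 -
      2 * (lam ⬝ᵥ μhat) + ν * ∑ k, |lam k|)
    (lamhat : Fin p → ℝ) (hmin : ∀ lam, Lhat lamhat ≤ Lhat lam)
    (lamstar : Fin p → ℝ) (S : Finset (Fin p))
    (hsupp : ∀ j ∉ S, lamstar j = 0)
    (hnoise : ∀ j : Fin p,
      |(((1 / (n : ℝ)) • ((Xcᵀ * Xc) *ᵥ lamstar)) - μhat) j| ≤ ν / 4)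
    (φ₀ : ℝ) (hφ₀ : 0 < φ₀)
    (hcompat : ∀ v : Fin p → ℝ,
      (∑ j ∈ Sᶜ, |v j|) ≤ 3 * ∑ j ∈ S, |v j| →
      (∑ j ∈ S, |v j|) ^ 2 ≤
        ((S.card : ℝ) / φ₀ ^ 2) * ((1 / (n : ℝ)) * ∑ i, (Xc *ᵥ v) i ^ 2)) :
    ∑ j, |(lamhat - lamstar) j| ≤ 6 * S.card * ν / φ₀ ^ 2 := by
  set v : Fin p → ℝ := lamhat - lamstar with hv
  set a : ℝ := 1 / (n : ℝ) with ha
  have ha0 : 0 < a := by positivity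
  set w : Fin p → ℝ := ((1 / (n : ℝ)) • ((Xcᵀ * Xc) *ᵥ lamstar)) - μhat with hw
  set T : ℝ := ∑ j ∈ S, |v j| with hT
  set U : ℝ := ∑ j ∈ Sᶜ, |v j| with hU
  set Qv : ℝ := ∑ i, (Xc *ᵥ v) i ^ 2 with hQv
  have hQv0 : 0 ≤ Qv := Finset.sum_nonneg fun i _ => sq_nonneg _
  have hT0 : 0 ≤ T := Finset.sum_nonneg fun i _ => abs_nonneg _
  have hU0 : 0 ≤ U := Finset.sum_nonneg fun i _ => abs_nonneg _
  -- basic inequality from minimality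
  have hbasic := hmin lamstar
  rw [hL lamhat, hL lamstar] at hbasic
  -- quadratic expansion
  have hexp : ∑ i, (Xc *ᵥ lamhat) i ^ 2
      = Qv + 2 * (v ⬝ᵥ ((Xcᵀ * Xc) *ᵥ lamstar)) + ∑ i, (Xc *ᵥ lamstar) i ^ 2 := by
    have hlam : lamhat = v + lamstar := by simp [hv]
    have hcross : ∑ i, (Xc *ᵥ v) i * (Xc *ᵥ lamstar) i
        = v ⬝ᵥ ((Xcᵀ * Xc) *ᵥ lamstar) := by
      rw [← mulVec_mulVec, dotProduct_mulVec, vecMul_transpose]; rfl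
    rw [hQv, hlam, mulVec_add, ← hcross, Finset.mul_sum,
      ← Finset.sum_add_distrib, ← Finset.sum_add_distrib]
    apply Finset.sum_congr rfl
    intro i _
    simp only [Pi.add_apply]
    ring
  -- dot products
  have hdot : lamhat ⬝ᵥ μhat - lamstar ⬝ᵥ μhat = v ⬝ᵥ μhat := by
    simp [hv, dotProduct, Finset.sum_sub_distrib, sub_mul]
  have hvw2 : v ⬝ᵥ w
      = a * (v ⬝ᵥ ((Xcᵀ * Xc) *ᵥ lamstar)) - v ⬝ᵥ μhat := by
    simp only [hw, dotProduct, Pi.sub_apply, Pi.smul_apply, smul_eq_mul, mul_sub]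
    rw [Finset.sum_sub_distrib, Finset.mul_sum]
    congr 1
    exact Finset.sum_congr rfl fun j _ => by rw [ha]; ring
  -- v ⬝ w bound
  have hvw : |v ⬝ᵥ w| ≤ (ν / 4) * (T + U) := by
    have hTU : T + U = ∑ j, |v j| := by
      rw [hT, hU, Finset.sum_add_sum_compl S]
    rw [hTU]
    calc |v ⬝ᵥ w| ≤ ∑ j, |v j * w j| := Finset.abs_sum_le_sum_abs _ _
      _ ≤ ∑ j, |v j| * (ν / 4) := by
          apply Finset.sum_le_sum
          intro j _
          rw [abs_mul]
          exact mul_le_mul_of_nonneg_left (hnoise j) (abs_nonneg _)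
      _ = (ν / 4) * ∑ j, |v j| := by rw [← Finset.sum_mul, mul_comm]
  -- l1 norm decompositions
  have hstar : ∑ k, |lamstar k| = ∑ j ∈ S, |lamstar j| := by
    rw [← Finset.sum_add_sum_compl S]
    have h0 : ∑ j ∈ Sᶜ, |lamstar j| = 0 :=
      Finset.sum_eq_zero fun j hj => by
        rw [hsupp j (Finset.mem_compl.mp hj), abs_zero]
    rw [h0, add_zero]
  have hhat : ∑ k, |lamhat k| = (∑ j ∈ S, |lamhat j|) + U := by
    rw [← Finset.sum_add_sum_compl S, hU]
    congr 1
    apply Finset.sum_congr rfl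
    intro j hj
    have : v j = lamhat j - lamstar j := rfl
    rw [this, hsupp j (Finset.mem_compl.mp hj), sub_zero]
  have htri : ∑ j ∈ S, |lamstar j| - ∑ j ∈ S, |lamhat j| ≤ T := by
    rw [hT, ← Finset.sum_sub_distrib]
    apply Finset.sum_le_sum
    intro j _
    have : v j = lamhat j - lamstar j := rfl
    rw [this]
    calc |lamstar j| - |lamhat j| ≤ |lamstar j - lamhat j| := abs_sub_abs_le_abs_sub _ _
      _ = |lamhat j - lamstar j| := abs_sub_comm _ _
  -- main inequality : a*Qv ≤ (3ν/2) T − (ν/2) U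
  have hmain : a * Qv ≤ (3 * ν / 2) * T - (ν / 2) * U := by
    have h1 : a * Qv + 2 * (v ⬝ᵥ w) + ν * U ≤ ν * T := by
      rw [hexp] at hbasic
      rw [hstar, hhat] at hbasic
      have := htri
      nlinarith [hvw2, hdot, hbasic]
    have h2 : -(2 * (v ⬝ᵥ w)) ≤ 2 * ((ν / 4) * (T + U)) := by
      have := (abs_le.mp hvw).1
      linarith
    linarith
  -- cone condition
  have hcone : U ≤ 3 * T := by
    have : ν * U ≤ ν * (3 * T) := by
      linarith [mul_nonneg ha0.le hQv0, hmain]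
    exact le_of_mul_le_mul_left this hν
  -- compatibility
  have hc := hcompat v hcone
  rw [← hQv] at hc
  have hTbound : T ≤ 3 * (S.card : ℝ) * ν / (2 * φ₀ ^ 2) := by
    have hs0 : (0 : ℝ) ≤ (S.card : ℝ) := Nat.cast_nonneg _
    rcases eq_or_lt_of_le hT0 with h | h
    · rw [← h]; positivity
    · have haq : a * Qv ≤ (3 * ν / 2) * T := by
        linarith [mul_nonneg (by linarith : (0:ℝ) ≤ ν / 2) hU0]
      have hTT : T * T ≤ (3 * (S.card : ℝ) * ν / (2 * φ₀ ^ 2)) * T := by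
        calc T * T = T ^ 2 := (sq T).symm
          _ ≤ ((S.card : ℝ) / φ₀ ^ 2) * (a * Qv) := hc
          _ ≤ ((S.card : ℝ) / φ₀ ^ 2) * ((3 * ν / 2) * T) :=
              mul_le_mul_of_nonneg_left haq (by positivity)
          _ = (3 * (S.card : ℝ) * ν / (2 * φ₀ ^ 2)) * T := by ring
      exact le_of_mul_le_mul_right hTT h
  -- conclude
  have hTU : ∑ j, |v j| = T + U := by
    rw [hT, hU, Finset.sum_add_sum_compl S]
  rw [hTU]
  have : T + U ≤ 4 * T := by linarith
  calc T + U ≤ 4 * T := this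
    _ ≤ 4 * (3 * (S.card : ℝ) * ν / (2 * φ₀ ^ 2)) := by linarith
    _ = 6 * S.card * ν / φ₀ ^ 2 := by ring
end
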